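/- (Dual relative smoothness for exponential penalty) Let f_τ(x) = cᵀx + τ Σᵢ exp((A_i x − b_i)/τ) where A ∈ ℝ^{n×d} has unit-norm rows and full rank d, and the polytope P = {x : Ax ≤ b} is contained in a ball of radius R and contains a ball of radius r > 0. Let k(x*) = ‖x*‖ − log(‖x*‖+1). Then ∇²f_τ(x) ⪯ L*_τ · [∇²k(∇f_τ(x))]⁻¹ for all x ∈ ℝ^d, where L*_τ = (2R/r)·(‖AᵀA‖/τ)·(η + ‖c‖) with η = sup_{‖s‖_∞ ≤ 1} ‖Aᵀs‖. -/

import Mathlib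

/-!
Write `s = ‖y‖ + 1`. The Hessian of `k` is `H = s⁻¹ (I - y yᵀ / (‖y‖ s))`, and
`⟪H u, u⟫ - s ‖H u‖² = ⟪y, u⟫² / (‖y‖ s³) ≥ 0`; with `u = H⁻¹ v` this is
`[∇²k(y)]⁻¹ ⪰ (1 + ‖y‖) I`. As `∇²f_τ(x) = τ⁻¹ ∑ wᵢ Aᵢ Aᵢᵀ ⪯ τ⁻¹ (maxᵢ wᵢ) AᵀA`, it remains
to bound every weight `wᵢ = exp ((⟪Aᵢ, x⟫ - bᵢ) / τ)` by `(2R/r) (η + ‖c‖) (1 + ‖∇f_τ(x)‖)`.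
If the largest violation `T = maxᵢ (⟪Aᵢ, x⟫ - bᵢ)` is positive, moving `x` towards the centre of
the inscribed ball reaches `P` at a point `z` with `‖x - z‖ ≤ 2RT/r`, and testing
`∑ wᵢ Aᵢ = ∇f_τ(x) - c` against `x - z` gives `exp (T/τ) T ≤ (‖∑ wᵢ Aᵢ‖ + η) ‖x - z‖`.
-/

open Filter Topology RealInnerProductSpace Classical

noncomputable section

abbrev E (d : ℕ) := EuclideanSpace ℝ (Fin d)

section Hessian

variable {F : Type*} [NormedAddCommGroup F] [InnerProductSpace ℝ F]

/-- `∇²k(y)` for `k(y) = ‖y‖ - log (‖y‖ + 1)`, i.e. the derivative of `∇k(y) = (‖y‖ + 1)⁻¹ • y`;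
at `y = 0` the junk value `0⁻¹ = 0` makes it the identity, as it should be. -/
def kHessian (y : F) : F →L[ℝ] F :=
  (‖y‖ + 1)⁻¹ • ContinuousLinearMap.id ℝ F -
    (‖y‖⁻¹ * ((‖y‖ + 1) ^ 2)⁻¹) • (innerSL ℝ y).smulRight y

lemma kHessian_apply (y u : F) :
    kHessian y u = (‖y‖ + 1)⁻¹ • u - (‖y‖⁻¹ * ((‖y‖ + 1) ^ 2)⁻¹ * ⟪y, u⟫) • y := by
  simp [kHessian, mul_smul]

lemma hasFDerivAt_norm_of_ne_zero {y : F} (hy : y ≠ 0) :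
    HasFDerivAt (fun w : F => ‖w‖) (‖y‖⁻¹ • innerSL ℝ y) y := by
  have h := (hasStrictFDerivAt_norm_sq y).hasFDerivAt.sqrt (by positivity)
  simp only [Real.sqrt_sq (norm_nonneg _)] at h
  convert h using 1
  ext u
  simp only [smul_apply, coe_innerSL_apply, smul_eq_mul, one_div, mul_inv_rev,
    nsmul_eq_mul, Nat.cast_ofNat]
  field_simp

lemma hasFDerivAt_inv_norm_add_one_smul (y : F) :
    HasFDerivAt (fun w : F => (‖w‖ + 1)⁻¹ • w) (kHessian y) y := by
  rcases eq_or_ne y 0 with rfl | hy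
  · have hid : kHessian (0 : F) = ContinuousLinearMap.id ℝ F := by
      ext u; simp [kHessian_apply]
    rw [hid, hasFDerivAt_iff_isLittleO_nhds_zero]
    -- the remainder `-(‖h‖ / (‖h‖ + 1)) • h` is quadratically small
    refine (Asymptotics.isBigO_of_le _ fun h => ?_).trans_isLittleO
      (Asymptotics.isLittleO_norm_pow_id (E' := F) one_lt_two)
    have hpos : 0 < ‖h‖ + 1 := by positivity
    have e : (‖0 + h‖ + 1)⁻¹ • (0 + h) - (‖(0 : F)‖ + 1)⁻¹ • (0 : F) -
        ContinuousLinearMap.id ℝ F h = -(‖h‖ / (‖h‖ + 1)) • h := by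
      simp only [zero_add, smul_zero, sub_zero, ContinuousLinearMap.id_apply]
      match_scalars
      field_simp
      ring
    rw [e, norm_smul, norm_neg, Real.norm_of_nonneg (by positivity),
      Real.norm_of_nonneg (by positivity), sq, div_mul_eq_mul_div, div_le_iff₀ hpos]
    nlinarith [norm_nonneg h]
  · have hs : ‖y‖ + 1 ≠ 0 := by positivity
    have h := ((hasDerivAt_inv hs).comp_hasFDerivAt y
      ((hasFDerivAt_norm_of_ne_zero hy).add_const 1)).smul (hasFDerivAt_id y)
    refine h.congr_fderiv ?_
    ext u
    simp only [Function.comp_apply, id_eq, add_apply,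
      smul_apply, ContinuousLinearMap.id_apply,
      ContinuousLinearMap.smulRight_apply, coe_innerSL_apply, smul_eq_mul, kHessian_apply]
    module

lemma one_add_norm_mul_norm_kHessian_sq_le_inner (y u : F) :
    (1 + ‖y‖) * ‖kHessian y u‖ ^ 2 ≤ ⟪kHessian y u, u⟫ := by
  rcases eq_or_ne y 0 with rfl | hy
  · simp [kHessian_apply]
  have hY : 0 < ‖y‖ := norm_pos_iff.mpr hy
  have key : ⟪kHessian y u, u⟫ - (1 + ‖y‖) * ‖kHessian y u‖ ^ 2 =
      ⟪y, u⟫ ^ 2 / (‖y‖ * (‖y‖ + 1) ^ 3) := by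
    rw [← real_inner_self_eq_norm_sq, kHessian_apply]
    simp only [inner_sub_left, inner_sub_right, real_inner_smul_left, real_inner_smul_right,
      real_inner_comm u y]
    rw [real_inner_self_eq_norm_sq y]
    field_simp
    ring
  have : 0 ≤ ⟪y, u⟫ ^ 2 / (‖y‖ * (‖y‖ + 1) ^ 3) := by positivity
  linarith

lemma one_add_norm_mul_sq_le_inner_of_comp_eq_id {K Kinv : F →L[ℝ] F} {y : F}
    (hK : HasFDerivAt (fun w : F => (‖w‖ + 1)⁻¹ • w) K y)
    (hinv : K.comp Kinv = ContinuousLinearMap.id ℝ F) (v : F) :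
    (1 + ‖y‖) * ‖v‖ ^ 2 ≤ ⟪v, Kinv v⟫ := by
  have hv : kHessian y (Kinv v) = v := by
    rw [← hK.unique (hasFDerivAt_inv_norm_add_one_smul y)]
    exact DFunLike.congr_fun hinv v
  simpa [hv] using one_add_norm_mul_norm_kHessian_sq_le_inner y (Kinv v)

end Hessian

lemma le_of_closedBall_subset_closedBall {F : Type*} [NormedAddCommGroup F] [NormedSpace ℝ F]
    [Nontrivial F] {x y : F} {r R : ℝ} (hr : 0 ≤ r)
    (h : Metric.closedBall x r ⊆ Metric.closedBall y R) : r ≤ R := by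
  obtain ⟨u, hu⟩ := exists_norm_eq F hr
  have h₁ : dist (x + u) y ≤ R := h (by simp [hu])
  have h₂ : dist y (x - u) ≤ R := Metric.mem_closedBall'.mp (h (by simp [hu]))
  have : 2 * r ≤ 2 * R := by
    calc 2 * r = dist (x + u) (x - u) := by
          rw [dist_eq_norm, add_sub_sub_cancel, ← two_smul ℝ u, norm_smul, hu]; norm_num
      _ ≤ 2 * R := by linarith [dist_triangle (x + u) y (x - u)]
  linarith

section Polyhedron

variable {F : Type*} [NormedAddCommGroup F] [InnerProductSpace ℝ F] {ι : Type*}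

def polyhedron (A : ι → F) (b : ι → ℝ) : Set F := {x | ∀ i, ⟪A i, x⟫ ≤ b i}

variable {A : ι → F} {b : ι → ℝ}

lemma le_sub_inner_of_closedBall_subset_polyhedron {x₀ : F} {r : ℝ} (hr : 0 ≤ r)
    (h : Metric.closedBall x₀ r ⊆ polyhedron A b) {i : ι} (hA : ‖A i‖ = 1) :
    r ≤ b i - ⟪A i, x₀⟫ := by
  have : ⟪A i, x₀ + r • A i⟫ ≤ b i := h (by simp [norm_smul, hA, abs_of_nonneg hr]) i
  rw [inner_add_right, real_inner_smul_right, real_inner_self_eq_norm_sq, hA] at this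
  linarith

lemma exists_mem_polyhedron_norm_sub_le (hA : ∀ i, ‖A i‖ = 1) {xR xr : F} {R r : ℝ}
    (hr : 0 < r) (hPR : polyhedron A b ⊆ Metric.closedBall xR R)
    (hPr : Metric.closedBall xr r ⊆ polyhedron A b) {x : F} {T : ℝ} (hT : 0 ≤ T)
    (hx : ∀ i, ⟪A i, x⟫ - b i ≤ T) :
    ∃ z ∈ polyhedron A b, ‖x - z‖ ≤ 2 * R * T / r := by
  -- on the segment from `xr` to `x`, the slack `r` at `xr` absorbs the violation `T` at `x`
  set z := xr + (r / (T + r)) • (x - xr)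
  have hTr : 0 < T + r := by positivity
  have hz : z ∈ polyhedron A b := by
    intro i
    have hslack := le_sub_inner_of_closedBall_subset_polyhedron hr.le hPr (hA i)
    have hcomb : ⟪A i, z⟫ - b i = (T * (⟪A i, xr⟫ - b i) + r * (⟪A i, x⟫ - b i)) / (T + r) := by
      simp only [z, inner_add_right, real_inner_smul_right, inner_sub_right]
      field_simp
      ring
    have hnum : T * (⟪A i, xr⟫ - b i) + r * (⟪A i, x⟫ - b i) ≤ 0 := by nlinarith [hx i]
    linarith [div_nonpos_of_nonpos_of_nonneg hnum hTr.le]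
  refine ⟨z, hz, ?_⟩
  have hxz : x - z = (T / r) • (z - xr) := by
    simp only [z, add_sub_cancel_left, smul_smul]
    match_scalars <;> field_simp <;> ring
  have hzxr : ‖z - xr‖ ≤ 2 * R := by
    rw [← dist_eq_norm]
    have := dist_triangle_right z xr xR
    have := Metric.mem_closedBall.mp (hPR hz)
    have := Metric.mem_closedBall.mp (hPR (hPr (Metric.mem_closedBall_self hr.le)))
    linarith
  rw [hxz, norm_smul, Real.norm_of_nonneg (by positivity)]
  calc T / r * ‖z - xr‖ ≤ T / r * (2 * R) := by gcongr
    _ = 2 * R * T / r := by ring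

/-- On the constraints violated at `x` use `⟪A j, x - z⟫ ≥ ⟪A j, x⟫ - b j ≥ 0`; the remaining
weights are at most one, so their contribution is controlled by `η`. -/
lemma mul_sub_le_of_mem_polyhedron [Fintype ι] {η : ℝ}
    (hη : ∀ s : ι → ℝ, (∀ i, |s i| ≤ 1) → ‖∑ i, s i • A i‖ ≤ η) {x z : F}
    (hz : z ∈ polyhedron A b) {w : ι → ℝ} (hw₀ : ∀ i, 0 ≤ w i)
    (hw₁ : ∀ i, ⟪A i, x⟫ - b i ≤ 0 → w i ≤ 1) {i : ι} (hi : 0 ≤ ⟪A i, x⟫ - b i) :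
    w i * (⟪A i, x⟫ - b i) ≤ (‖∑ j, w j • A j‖ + η) * ‖x - z‖ := by
  set q : ι → ℝ := fun j => if 0 < ⟪A j, x⟫ - b j then 0 else w j
  have hq : ‖∑ j, q j • A j‖ ≤ η := by
    refine hη q fun j => ?_
    by_cases hj : 0 < ⟪A j, x⟫ - b j
    · simp only [q, if_pos hj, abs_zero, zero_le_one]
    · simpa only [q, if_neg hj, abs_of_nonneg (hw₀ j)] using hw₁ j (not_lt.mp hj)
  have hslack : ∀ j, ⟪A j, x⟫ - b j ≤ ⟪A j, x - z⟫ := fun j => by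
    rw [inner_sub_right]; linarith [hz j]
  have hterm : ∀ j, 0 ≤ (w j - q j) * ⟪A j, x - z⟫ := fun j => by
    by_cases hj : 0 < ⟪A j, x⟫ - b j
    · simpa only [q, if_pos hj, sub_zero] using mul_nonneg (hw₀ j) (hj.le.trans (hslack j))
    · simp only [q, if_neg hj, sub_self, zero_mul, le_refl]
  have hterm_i : w i * (⟪A i, x⟫ - b i) ≤ (w i - q i) * ⟪A i, x - z⟫ := by
    by_cases hi' : 0 < ⟪A i, x⟫ - b i
    · simpa only [q, if_pos hi', sub_zero] using mul_le_mul_of_nonneg_left (hslack i) (hw₀ i)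
    · rw [le_antisymm (not_lt.mp hi') hi, mul_zero]; exact hterm i
  have hsplit : ∑ j, (w j - q j) * ⟪A j, x - z⟫ =
      ⟪∑ j, w j • A j, x - z⟫ - ⟪∑ j, q j • A j, x - z⟫ := by
    simp only [sum_inner, real_inner_smul_left, sub_mul, Finset.sum_sub_distrib]
  have hg := real_inner_le_norm (∑ j, w j • A j) (x - z)
  have hq' := neg_le_of_abs_le (abs_real_inner_le_norm (∑ j, q j • A j) (x - z))
  have hqη := mul_le_mul_of_nonneg_right hq (norm_nonneg (x - z))
  calc w i * (⟪A i, x⟫ - b i) ≤ ∑ j, (w j - q j) * ⟪A j, x - z⟫ :=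
        hterm_i.trans (Finset.single_le_sum (fun j _ => hterm j) (Finset.mem_univ i))
    _ ≤ (‖∑ j, w j • A j‖ + η) * ‖x - z‖ := by rw [hsplit]; linarith

section ExpWeights

variable [Fintype ι] (hA : ∀ i, ‖A i‖ = 1) {xR xr : F} {R r : ℝ} (hr : 0 < r)
  (hPR : polyhedron A b ⊆ Metric.closedBall xR R)
  (hPr : Metric.closedBall xr r ⊆ polyhedron A b) {η : ℝ}
  (hη : ∀ s : ι → ℝ, (∀ i, |s i| ≤ 1) → ‖∑ i, s i • A i‖ ≤ η) {τ : ℝ} (hτ : 0 < τ)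
include hA hr hPR hPr hη hτ

lemma exp_div_le_of_isMax_of_pos {x : F} {i₀ : ι}
    (hmax : ∀ j, ⟪A j, x⟫ - b j ≤ ⟪A i₀, x⟫ - b i₀) (hpos : 0 < ⟪A i₀, x⟫ - b i₀) :
    Real.exp ((⟪A i₀, x⟫ - b i₀) / τ) ≤
      2 * R / r * (‖∑ j, Real.exp ((⟪A j, x⟫ - b j) / τ) • A j‖ + η) := by
  set T := ⟪A i₀, x⟫ - b i₀
  obtain ⟨z, hz, hxz⟩ := exists_mem_polyhedron_norm_sub_le hA hr hPR hPr hpos.le hmax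
  have h := mul_sub_le_of_mem_polyhedron hη hz (w := fun j => Real.exp ((⟪A j, x⟫ - b j) / τ))
    (fun j => (Real.exp_pos _).le)
    (fun j hj => Real.exp_le_one_iff.mpr (div_nonpos_of_nonpos_of_nonneg hj hτ.le)) hpos.le
  have hη₀ : 0 ≤ η := by simpa using hη 0 (by simp)
  refine le_of_mul_le_mul_right ?_ hpos
  calc Real.exp (T / τ) * T
      ≤ (‖∑ j, Real.exp ((⟪A j, x⟫ - b j) / τ) • A j‖ + η) * (2 * R * T / r) :=
        h.trans (mul_le_mul_of_nonneg_left hxz (by positivity))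
    _ = 2 * R / r * (‖∑ j, Real.exp ((⟪A j, x⟫ - b j) / τ) • A j‖ + η) * T := by ring

lemma exp_div_le_mul_one_add_norm (c x : F) (i : ι) :
    Real.exp ((⟪A i, x⟫ - b i) / τ) ≤
      2 * R / r * (η + ‖c‖) * (1 + ‖c + ∑ j, Real.exp ((⟪A j, x⟫ - b j) / τ) • A j‖) := by
  set g := ∑ j, Real.exp ((⟪A j, x⟫ - b j) / τ) • A j
  have : Nontrivial F := nontrivial_of_ne (A i) 0 (norm_ne_zero_iff.mp (by simp [hA i]))
  have hRr : 1 ≤ 2 * R / r := by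
    rw [le_div_iff₀ hr]
    linarith [le_of_closedBall_subset_closedBall hr.le (hPr.trans hPR)]
  have hη₁ : 1 ≤ η := by
    simpa [Pi.single_apply, hA i] using hη (Pi.single i 1) fun j => by
      by_cases hj : j = i <;> simp [hj]
  have hg : ‖g‖ + η ≤ (η + ‖c‖) * (1 + ‖c + g‖) := by
    have : ‖g‖ ≤ ‖c + g‖ + ‖c‖ := by simpa using norm_sub_le (c + g) c
    nlinarith [mul_le_mul_of_nonneg_right hη₁ (norm_nonneg (c + g)),
      mul_nonneg (norm_nonneg c) (norm_nonneg (c + g))]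
  obtain ⟨i₀, -, hi₀⟩ := Finset.exists_max_image Finset.univ (fun j => ⟪A j, x⟫ - b j)
    ⟨i, Finset.mem_univ i⟩
  have hmax : ∀ j, ⟪A j, x⟫ - b j ≤ ⟪A i₀, x⟫ - b i₀ := fun j => hi₀ j (Finset.mem_univ j)
  have hexp : Real.exp ((⟪A i₀, x⟫ - b i₀) / τ) ≤ 2 * R / r * (‖g‖ + η) := by
    rcases le_or_gt (⟪A i₀, x⟫ - b i₀) 0 with hle | hpos
    · have : 1 ≤ 2 * R / r * (‖g‖ + η) := by nlinarith [norm_nonneg g]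
      exact (Real.exp_le_one_iff.mpr (div_nonpos_of_nonpos_of_nonneg hle hτ.le)).trans this
    · exact exp_div_le_of_isMax_of_pos hA hr hPR hPr hη hτ hmax hpos
  calc Real.exp ((⟪A i, x⟫ - b i) / τ) ≤ Real.exp ((⟪A i₀, x⟫ - b i₀) / τ) := by
        gcongr Real.exp (?_ / _)
        exact hmax i
    _ ≤ 2 * R / r * (‖g‖ + η) := hexp
    _ ≤ 2 * R / r * ((η + ‖c‖) * (1 + ‖c + g‖)) := by gcongr
    _ = 2 * R / r * (η + ‖c‖) * (1 + ‖c + g‖) := by ring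

end ExpWeights

end Polyhedron

section Gram

variable {F : Type*} [NormedAddCommGroup F] [InnerProductSpace ℝ F] {ι : Type*} [Fintype ι]

lemma bddAbove_norm_sum_smul (A : ι → F) :
    BddAbove {v : ℝ | ∃ s : ι → ℝ, (∀ i, |s i| ≤ 1) ∧ v = ‖∑ i, s i • A i‖} := by
  refine ⟨∑ i, ‖A i‖, ?_⟩
  rintro _ ⟨s, hs, rfl⟩
  refine (norm_sum_le _ _).trans (Finset.sum_le_sum fun i _ => ?_)
  rw [norm_smul, Real.norm_eq_abs]
  exact mul_le_of_le_one_left (norm_nonneg _) (hs i)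

lemma sum_inner_sq_le {A : ι → F} {N : ℝ}
    (hN : ∀ x : F, ‖x‖ = 1 → ‖∑ i, ⟪A i, x⟫ • A i‖ ≤ N) (v : F) :
    ∑ i, ⟪A i, v⟫ ^ 2 ≤ N * ‖v‖ ^ 2 := by
  rcases eq_or_ne v 0 with rfl | hv
  · simp
  have hS : ∑ i, ⟪A i, v⟫ • A i = ‖v‖ • ∑ i, ⟪A i, ‖v‖⁻¹ • v⟫ • A i := by
    simp [Finset.smul_sum, real_inner_smul_right, smul_smul, hv]
  calc ∑ i, ⟪A i, v⟫ ^ 2 = ⟪∑ i, ⟪A i, v⟫ • A i, v⟫ := by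
        simp only [sum_inner, real_inner_smul_left, sq]
    _ ≤ ‖∑ i, ⟪A i, v⟫ • A i‖ * ‖v‖ := real_inner_le_norm _ _
    _ = ‖v‖ * ‖∑ i, ⟪A i, ‖v‖⁻¹ • v⟫ • A i‖ * ‖v‖ := by rw [hS, norm_smul, norm_norm]
    _ ≤ ‖v‖ * N * ‖v‖ := by gcongr; exact hN _ (norm_smul_inv_norm hv)
    _ = N * ‖v‖ ^ 2 := by ring

end Gram

/-- `k''` is `∇²k`, taken as the derivative of `∇k(y) = y / (‖y‖ + 1)`, and `kinv` its inverse. -/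
theorem stmt19_general {n d : ℕ} (τ : ℝ) (hτ : 0 < τ)
    (A : Fin n → E d) (hA : ∀ i, ‖A i‖ = 1)
    (b : Fin n → ℝ) (c : E d)
    (R r : ℝ) (hr : 0 < r)
    (xR xr : E d)
    (hPR : {x : E d | ∀ i, ⟪A i, x⟫ ≤ b i} ⊆ Metric.closedBall xR R)
    (hPr : Metric.closedBall xr r ⊆ {x : E d | ∀ i, ⟪A i, x⟫ ≤ b i})
    (η nAA : ℝ)
    (hη : η = sSup {v : ℝ | ∃ s : Fin n → ℝ, (∀ i, |s i| ≤ 1) ∧ v = ‖∑ i, s i • A i‖})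
    (hnAA : nAA = sSup {v : ℝ | ∃ x : E d, ‖x‖ = 1 ∧ v = ‖∑ i, ⟪A i, x⟫ • A i‖})
    (k'' kinv : E d → (E d →L[ℝ] E d))
    (hk'' : ∀ y : E d, HasFDerivAt (fun w : E d => (‖w‖ + 1)⁻¹ • w) (k'' y) y)
    (hkinv : ∀ y : E d,
      (k'' y).comp (kinv y) = ContinuousLinearMap.id ℝ (E d) ∧
      (kinv y).comp (k'' y) = ContinuousLinearMap.id ℝ (E d)) :
    ∀ x v : E d,
      (1 / τ) * ∑ i, Real.exp ((⟪A i, x⟫ - b i) / τ) * ⟪A i, v⟫ ^ 2 ≤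
        ((2 * R / r) * (nAA / τ) * (η + ‖c‖)) *
          ⟪v, kinv (c + ∑ i, Real.exp ((⟪A i, x⟫ - b i) / τ) • A i) v⟫ := by
  have hbdd := bddAbove_norm_sum_smul A
  have hηle : ∀ s : Fin n → ℝ, (∀ i, |s i| ≤ 1) → ‖∑ i, s i • A i‖ ≤ η :=
    fun s hs => hη ▸ le_csSup hbdd ⟨s, hs, rfl⟩
  have hnAAle : ∀ x : E d, ‖x‖ = 1 → ‖∑ i, ⟪A i, x⟫ • A i‖ ≤ nAA := by
    refine fun x hx => hnAA ▸ le_csSup (hbdd.mono ?_) ⟨x, hx, rfl⟩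
    rintro _ ⟨x, hx, rfl⟩
    exact ⟨fun i => ⟪A i, x⟫,
      fun i => by simpa [hA i, hx] using abs_real_inner_le_norm (A i) x, rfl⟩
  have hη₀ : 0 ≤ η := by simpa using hηle 0 (by simp)
  have hnAA₀ : 0 ≤ nAA := hnAA ▸ Real.sSup_nonneg (by rintro _ ⟨x, -, rfl⟩; positivity)
  have hR₀ : 0 ≤ R :=
    Metric.nonempty_closedBall.mp ⟨xr, hPR (hPr (Metric.mem_closedBall_self hr.le))⟩
  intro x v
  set y := c + ∑ i, Real.exp ((⟪A i, x⟫ - b i) / τ) • A i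
  have hw := exp_div_le_mul_one_add_norm hA hr hPR hPr hηle hτ c x
  have hk := one_add_norm_mul_sq_le_inner_of_comp_eq_id (hk'' y) (hkinv y).1 v
  have hsum := sum_inner_sq_le hnAAle v
  calc (1 / τ) * ∑ i, Real.exp ((⟪A i, x⟫ - b i) / τ) * ⟪A i, v⟫ ^ 2
      ≤ (1 / τ) * ∑ i, 2 * R / r * (η + ‖c‖) * (1 + ‖y‖) * ⟪A i, v⟫ ^ 2 := by
        gcongr with i; exact hw i
    _ ≤ (1 / τ) * (2 * R / r * (η + ‖c‖) * (1 + ‖y‖) * (nAA * ‖v‖ ^ 2)) := by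
        rw [← Finset.mul_sum]; gcongr
    _ = (2 * R / r) * (nAA / τ) * (η + ‖c‖) * ((1 + ‖y‖) * ‖v‖ ^ 2) := by ring
    _ ≤ (2 * R / r) * (nAA / τ) * (η + ‖c‖) * ⟪v, kinv y v⟫ := by gcongr

/-- dual relative smoothness for exponential penalty functions: for
`f_τ(x) = ⟪c, x⟫ + τ ∑ᵢ exp((⟪Aᵢ, x⟫ - bᵢ)/τ)` with unit-norm rows `Aᵢ` spanning `ℝ^d`,
polytope `P = {x : Ax ≤ b}` contained in a ball of radius `R` and containing a ball of
radius `r > 0`, and `k(x*) = ‖x*‖ - log(‖x*‖+1)` with Hessian `k''` (the derivative of the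
gradient map `y ↦ y/(‖y‖+1)`) and inverse Hessian `kinv`, the Hessian quadratic form of
`f_τ` satisfies `∇²f_τ(x) ⪯ L*_τ · [∇²k(∇f_τ(x))]⁻¹`, where
`L*_τ = (2R/r)(‖AᵀA‖/τ)(η + ‖c‖)` with `η = sup_{‖s‖_∞ ≤ 1} ‖Aᵀ s‖` and `‖AᵀA‖` the
operator norm of `x ↦ ∑ᵢ ⟪Aᵢ, x⟫ Aᵢ`. -/
theorem stmt19 {n d : ℕ} (τ : ℝ) (hτ : 0 < τ)
    (A : Fin n → E d) (hA : ∀ i, ‖A i‖ = 1)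
    (hrank : Submodule.span ℝ (Set.range A) = ⊤)
    (b : Fin n → ℝ) (c : E d)
    (R r : ℝ) (hr : 0 < r)
    (xR xr : E d)
    (hPR : {x : E d | ∀ i, ⟪A i, x⟫ ≤ b i} ⊆ Metric.closedBall xR R)
    (hPr : Metric.closedBall xr r ⊆ {x : E d | ∀ i, ⟪A i, x⟫ ≤ b i})
    (η nAA : ℝ)
    (hη : η = sSup {v : ℝ | ∃ s : Fin n → ℝ, (∀ i, |s i| ≤ 1) ∧ v = ‖∑ i, s i • A i‖})
    (hnAA : nAA = sSup {v : ℝ | ∃ x : E d, ‖x‖ = 1 ∧ v = ‖∑ i, ⟪A i, x⟫ • A i‖})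
    (k'' kinv : E d → (E d →L[ℝ] E d))
    (hk'' : ∀ y : E d, HasFDerivAt (fun w : E d => (‖w‖ + 1)⁻¹ • w) (k'' y) y)
    (hkinv : ∀ y : E d,
      (k'' y).comp (kinv y) = ContinuousLinearMap.id ℝ (E d) ∧
      (kinv y).comp (k'' y) = ContinuousLinearMap.id ℝ (E d)) :
    ∀ x v : E d,
      (1 / τ) * ∑ i, Real.exp ((⟪A i, x⟫ - b i) / τ) * ⟪A i, v⟫ ^ 2 ≤
        ((2 * R / r) * (nAA / τ) * (η + ‖c‖)) *
          ⟪v, kinv (c + ∑ i, Real.exp ((⟪A i, x⟫ - b i) / τ) • A i) v⟫ :=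
  stmt19_general τ hτ A hA b c R r hr xR xr hPR hPr η nAA hη hnAA k'' kinv hk'' hkinv
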